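/- arXiv:1507.03291 — 2 statements merged into one kernel-verified Lean document; each statement's English description precedes it below -/
import Mathlib

section
/- Let K be a real Hilbert space, (x,y,z) ∈ K³, H(x,y) = {h : ⟨h-y,x-y⟩ ≤ 0}, χ = ⟨x-y,y-z⟩, μ = ‖x-y‖², ν = ‖y-z‖², ρ = μν - χ². If ρ > 0 and χν < ρ, then the projection of x onto H(x,y) ∩ H(y,z) is y + (ν/ρ)(χ(x-y) + μ(z-y)). -/
/-!
Write `u = x - y`, `w = y - z` and `p` for the claimed projection. The vector
`d = χ u - μ w` is orthogonal to `u` and satisfies `⟪d, w⟫ = -ρ`, so `p = y + (ν/ρ) d` lies on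
both bounding hyperplanes, and
`x - p = ((ρ - χν)/ρ) u + (νμ/ρ) w`
is a combination of the two outer normals with coefficients that are nonnegative exactly when
`χν ≤ ρ`. These are the Karush–Kuhn–Tucker conditions, which make `x - p` form an obtuse angle
with `h - p` for every `h` in the intersection.
-/

open scoped InnerProductSpace

/-- The half-space through `y` with outer normal `x - y`. -/
def haugH {E : Type*} [NormedAddCommGroup E] [InnerProductSpace ℝ E] (x y : E) : Set E :=
  {h : E | ⟪h - y, x - y⟫_ℝ ≤ 0}

section

variable {E : Type*} [NormedAddCommGroup E] [InnerProductSpace ℝ E]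

theorem norm_sub_le_norm_sub_of_inner_nonpos {x p h : E} (hle : ⟪x - p, h - p⟫_ℝ ≤ 0) :
    ‖x - p‖ ≤ ‖x - h‖ := by
  have hsq : ‖x - h‖ ^ 2 = ‖x - p‖ ^ 2 - 2 * ⟪x - p, h - p⟫_ℝ + ‖h - p‖ ^ 2 := by
    rw [← norm_sub_sq_real, sub_sub_sub_cancel_right]
  exact (pow_le_pow_iff_left₀ (norm_nonneg _) (norm_nonneg _) two_ne_zero).1
    (by linarith [sq_nonneg ‖h - p‖])

theorem inner_sub_nonpos_of_mem_haugH {x y p h : E} (hp : ⟪p - y, x - y⟫_ℝ = 0)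
    (hh : h ∈ haugH x y) : ⟪x - y, h - p⟫_ℝ ≤ 0 := by
  rw [← sub_sub_sub_cancel_right h p y, inner_sub_right, real_inner_comm, real_inner_comm (p - y),
    hp, sub_zero]
  exact hh

theorem norm_sub_le_norm_sub_of_mem_inter_haugH {x₁ y₁ x₂ y₂ x p h : E} {α β : ℝ}
    (hp₁ : ⟪p - y₁, x₁ - y₁⟫_ℝ = 0) (hp₂ : ⟪p - y₂, x₂ - y₂⟫_ℝ = 0) (hα : 0 ≤ α) (hβ : 0 ≤ β)
    (hxp : x - p = α • (x₁ - y₁) + β • (x₂ - y₂)) (hh : h ∈ haugH x₁ y₁ ∩ haugH x₂ y₂) :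
    ‖x - p‖ ≤ ‖x - h‖ := by
  refine norm_sub_le_norm_sub_of_inner_nonpos ?_
  rw [hxp, inner_add_left, real_inner_smul_left, real_inner_smul_left]
  have h₁ := inner_sub_nonpos_of_mem_haugH hp₁ hh.1
  have h₂ := inner_sub_nonpos_of_mem_haugH hp₂ hh.2
  nlinarith

theorem inner_gram_sub_left (u w : E) : ⟪⟪u, w⟫_ℝ • u - ‖u‖ ^ 2 • w, u⟫_ℝ = 0 := by
  rw [inner_sub_left, real_inner_smul_left, real_inner_smul_left, real_inner_self_eq_norm_sq,
    real_inner_comm]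
  ring

theorem inner_gram_sub_right (u w : E) :
    ⟪⟪u, w⟫_ℝ • u - ‖u‖ ^ 2 • w, w⟫_ℝ = -(‖u‖ ^ 2 * ‖w‖ ^ 2 - ⟪u, w⟫_ℝ ^ 2) := by
  rw [inner_sub_left, real_inner_smul_left, real_inner_smul_left, real_inner_self_eq_norm_sq]
  ring

end

theorem haugazeau_proj_case3_general
    {E : Type*} [NormedAddCommGroup E] [InnerProductSpace ℝ E]
    (x y z : E)
    (χ μ ν ρ : ℝ)
    (hχ : χ = ⟪x - y, y - z⟫_ℝ) (hμ : μ = ‖x - y‖ ^ 2) (hν : ν = ‖y - z‖ ^ 2)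
    (hρ : ρ = μ * ν - χ ^ 2)
    (h0 : 0 < ρ) (hcase : χ * ν < ρ) :
    y + (ν / ρ) • (χ • (x - y) + μ • (z - y)) ∈ haugH x y ∩ haugH y z ∧
      ∀ h ∈ haugH x y ∩ haugH y z,
        ‖x - (y + (ν / ρ) • (χ • (x - y) + μ • (z - y)))‖ ≤ ‖x - h‖ := by
  have hd : χ • (x - y) + μ • (z - y) = χ • (x - y) - μ • (y - z) := by
    rw [← neg_sub y z, smul_neg, ← sub_eq_add_neg]
  have hdu : ⟪χ • (x - y) - μ • (y - z), x - y⟫_ℝ = 0 := by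
    rw [hχ, hμ]; exact inner_gram_sub_left _ _
  have hdw : ⟪χ • (x - y) - μ • (y - z), y - z⟫_ℝ = -ρ := by
    rw [hρ, hχ, hμ, hν]; exact inner_gram_sub_right _ _
  rw [hd]
  set p := y + (ν / ρ) • (χ • (x - y) - μ • (y - z))
  have hp₁ : ⟪p - y, x - y⟫_ℝ = 0 := by
    rw [add_sub_cancel_left, real_inner_smul_left, hdu, mul_zero]
  have hp₂ : ⟪p - z, y - z⟫_ℝ = 0 := by
    rw [add_sub_right_comm, inner_add_left, real_inner_smul_left, hdw, real_inner_self_eq_norm_sq,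
      ← hν]
    field_simp
    ring
  have hxp : x - p = ((ρ - χ * ν) / ρ) • (x - y) + (ν * μ / ρ) • (y - z) := by
    match_scalars <;> field_simp
    ring
  have hνμ : 0 ≤ ν * μ := by rw [hν, hμ]; positivity
  exact ⟨⟨hp₁.le, hp₂.le⟩, fun h hh => norm_sub_le_norm_sub_of_mem_inter_haugH hp₁ hp₂
    (div_nonneg (sub_nonneg.2 hcase.le) h0.le) (div_nonneg hνμ h0.le) hxp hh⟩

/-- If `ρ > 0` and `χν < ρ`, then the projection of `x` onto
`H(x,y) ∩ H(y,z)` is `y + (ν/ρ)(χ(x-y) + μ(z-y))`. -/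
theorem haugazeau_proj_case3
    {E : Type*} [NormedAddCommGroup E] [InnerProductSpace ℝ E] [CompleteSpace E]
    (x y z : E)
    (χ μ ν ρ : ℝ)
    (hχ : χ = ⟪x - y, y - z⟫_ℝ) (hμ : μ = ‖x - y‖ ^ 2) (hν : ν = ‖y - z‖ ^ 2)
    (hρ : ρ = μ * ν - χ ^ 2)
    (h0 : 0 < ρ) (hcase : χ * ν < ρ) :
    y + (ν / ρ) • (χ • (x - y) + μ • (z - y)) ∈ haugH x y ∩ haugH y z ∧
      ∀ h ∈ haugH x y ∩ haugH y z,
        ‖x - (y + (ν / ρ) • (χ • (x - y) + μ • (z - y)))‖ ≤ ‖x - h‖ :=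
  haugazeau_proj_case3_general x y z χ μ ν ρ hχ hμ hν hρ h0 hcase
end

section
/- In the Haugazeau iteration, if additionally every weak sequential cluster point of (xₙ) lies in C, then xₙ converges strongly to P_C x₀, the projection of x₀ onto C. -/
/-!
By induction, `C ⊆ H(x₀, xₙ)` for every `n`: `xₙ₊₁` is the projection of `x₀` onto the convex set
`H(x₀, xₙ) ∩ H(xₙ, xₙ₊½) ⊇ C`, so `C` lies in `H(x₀, xₙ₊₁)` by the variational inequality.
For `p = P_C x₀` this gives `‖x₀ - xₙ‖² + ‖p - xₙ‖² ≤ ‖x₀ - p‖²`, while `xₙ₊₁ ∈ H(x₀, xₙ)` makes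
`‖x₀ - xₙ‖` nondecreasing. Its limit `L` is at most `‖x₀ - p‖`; conversely a weak cluster point
`w ∈ C` of the bounded sequence `(xₙ)` satisfies `‖x₀ - p‖ ≤ ‖x₀ - w‖ ≤ L` by weak lower
semicontinuity of the norm. Hence `‖p - xₙ‖² ≤ ‖x₀ - p‖² - ‖x₀ - xₙ‖² → 0`.
-/

open scoped InnerProductSpace
open Filter Topology

section Haugazeau

variable {E : Type*} [NormedAddCommGroup E] [InnerProductSpace ℝ E]

theorem convex_haugH (x y : E) : Convex ℝ (haugH x y) := by
  have h : haugH x y = {h : E | ⟪x - y, h⟫_ℝ ≤ ⟪x - y, y⟫_ℝ} := Set.ext fun h => by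
    change ⟪h - y, x - y⟫_ℝ ≤ 0 ↔ ⟪x - y, h⟫_ℝ ≤ ⟪x - y, y⟫_ℝ
    rw [← sub_nonpos (a := ⟪x - y, h⟫_ℝ), ← inner_sub_right, real_inner_comm]
  rw [h]
  exact convex_halfSpace_le (innerₛₗ ℝ (x - y)).isLinear _

theorem sq_norm_sub_add_sq_norm_sub_le_of_mem_haugH {a b c : E} (h : b ∈ haugH a c) :
    ‖a - c‖ ^ 2 + ‖b - c‖ ^ 2 ≤ ‖a - b‖ ^ 2 := by
  have hab : a - b = (a - c) - (b - c) := by abel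
  have h' : ⟪b - c, a - c⟫_ℝ ≤ 0 := h
  rw [hab]
  linarith [norm_sub_sq_real (a - c) (b - c), real_inner_comm (a - c) (b - c)]

theorem norm_sub_le_norm_sub_of_mem_haugH {a b c : E} (h : b ∈ haugH a c) :
    ‖a - c‖ ≤ ‖a - b‖ :=
  (sq_le_sq₀ (norm_nonneg _) (norm_nonneg _)).mp <| by
    nlinarith [sq_norm_sub_add_sq_norm_sub_le_of_mem_haugH h, sq_nonneg ‖b - c‖]

theorem subset_haugH_of_forall_norm_sub_le {D : Set E} (hD : Convex ℝ D) {a p : E} (hp : p ∈ D)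
    (hmin : ∀ y ∈ D, ‖a - p‖ ≤ ‖a - y‖) : D ⊆ haugH a p := by
  have : Nonempty D := ⟨⟨p, hp⟩⟩
  have hbdd : BddBelow (Set.range fun y : D => ‖a - y‖) := ⟨0, by rintro r ⟨y, rfl⟩; positivity⟩
  have hinf : ‖a - p‖ = ⨅ y : D, ‖a - y‖ :=
    le_antisymm (le_ciInf fun y => hmin y y.2) (ciInf_le hbdd ⟨p, hp⟩)
  intro y hy
  change ⟪y - p, a - p⟫_ℝ ≤ 0
  rw [real_inner_comm]
  exact (norm_eq_iInf_iff_real_inner_le_zero hD hp).mp hinf y hy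

theorem exists_subseq_weak_tendsto [CompleteSpace E] {x : ℕ → E} {B : ℝ} (hB : ∀ n, ‖x n‖ ≤ B) :
    ∃ (w : E) (q : ℕ → ℕ), StrictMono q ∧
      ∀ u : E, Tendsto (fun n => ⟪x (q n), u⟫_ℝ) atTop (𝓝 ⟪w, u⟫_ℝ) := by
  -- sequential Banach–Alaoglu in the separable Hilbert space spanned by the sequence
  set M : Submodule ℝ E := (Submodule.span ℝ (Set.range x)).topologicalClosure
  have hxM (n : ℕ) : x n ∈ M := Submodule.le_topologicalClosure _ (Submodule.subset_span ⟨n, rfl⟩)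
  have : CompleteSpace M := (Submodule.isClosed_topologicalClosure _).completeSpace_coe
  have : TopologicalSpace.SeparableSpace M :=
    ((Set.countable_range x).isSeparable.span.closure).separableSpace
  set φ : ℕ → WeakDual ℝ M := fun n => InnerProductSpace.toDual ℝ M ⟨x n, hxM n⟩
  have hφ (n : ℕ) : φ n ∈ WeakDual.toStrongDual ⁻¹' Metric.closedBall (0 : StrongDual ℝ M) B :=
    mem_closedBall_zero_iff.mpr (((InnerProductSpace.toDual ℝ M).norm_map _).trans_le (hB n))
  obtain ⟨ψ, -, q, hq, hψ⟩ := WeakDual.isSeqCompact_closedBall ℝ M 0 B hφ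
  refine ⟨(InnerProductSpace.toDual ℝ M).symm (WeakDual.toStrongDual ψ), q, hq, fun u => ?_⟩
  have hφu (n : ℕ) : ⟪x n, u⟫_ℝ = φ n (M.orthogonalProjectionOnto u) :=
    (M.inner_orthogonalProjectionOnto_eq_of_mem_left ⟨x n, hxM n⟩ u).symm
  simp only [hφu, ← M.inner_orthogonalProjectionOnto_eq_of_mem_left,
    InnerProductSpace.toDual_symm_apply]
  exact ((WeakDual.eval_continuous _).tendsto ψ).comp hψ

theorem norm_le_of_weak_tendsto {y : ℕ → E} {w : E} {L : ℝ}
    (hw : ∀ u : E, Tendsto (fun n => ⟪y n, u⟫_ℝ) atTop (𝓝 ⟪w, u⟫_ℝ))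
    (hL : Tendsto (fun n => ‖y n‖) atTop (𝓝 L)) : ‖w‖ ≤ L := by
  have hL0 : 0 ≤ L := ge_of_tendsto' hL fun n => norm_nonneg _
  have hsq : ‖w‖ * ‖w‖ ≤ L * ‖w‖ := by
    rw [← real_inner_self_eq_norm_mul_norm]
    exact le_of_tendsto_of_tendsto' (hw w) (hL.mul_const _) fun n => real_inner_le_norm _ _
  rcases (norm_nonneg w).eq_or_lt with hw0 | hw0
  · exact hw0 ▸ hL0
  · exact le_of_mul_le_mul_right hsq hw0

theorem tendsto_norm_sub_of_subset_haugH [CompleteSpace E] {C : Set E} {x₀ p : E} {x : ℕ → E}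
    (hp : p ∈ C ∧ ∀ y ∈ C, ‖x₀ - p‖ ≤ ‖x₀ - y‖) (hC : ∀ n, C ⊆ haugH x₀ (x n))
    (hmono : Monotone fun n => ‖x₀ - x n‖)
    (hcluster : ∀ (w : E) (q : ℕ → ℕ), StrictMono q →
      (∀ u : E, Tendsto (fun n => ⟪x (q n), u⟫_ℝ) atTop (𝓝 ⟪w, u⟫_ℝ)) → w ∈ C) :
    Tendsto (fun n => ‖x₀ - x n‖) atTop (𝓝 ‖x₀ - p‖) := by
  have hbdd (n : ℕ) : ‖x₀ - x n‖ ≤ ‖x₀ - p‖ := norm_sub_le_norm_sub_of_mem_haugH (hC n hp.1)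
  have hbdd' : BddAbove (Set.range fun n => ‖x₀ - x n‖) := ⟨_, Set.forall_mem_range.mpr hbdd⟩
  have hL := tendsto_atTop_ciSup hmono hbdd'
  set L := ⨆ n, ‖x₀ - x n‖
  have hx_bdd (n : ℕ) : ‖x n‖ ≤ ‖x₀‖ + ‖x₀ - p‖ := by
    calc ‖x n‖ = ‖x₀ - (x₀ - x n)‖ := by rw [sub_sub_cancel]
      _ ≤ ‖x₀‖ + ‖x₀ - x n‖ := norm_sub_le _ _
      _ ≤ ‖x₀‖ + ‖x₀ - p‖ := add_le_add le_rfl (hbdd n)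
  obtain ⟨w, q, hq, hwk⟩ := exists_subseq_weak_tendsto hx_bdd
  have hw_le : ‖x₀ - w‖ ≤ L := by
    refine norm_le_of_weak_tendsto (fun u => ?_) (hL.comp hq.tendsto_atTop)
    simpa only [inner_sub_left] using tendsto_const_nhds.sub (hwk u)
  have hL_eq : L = ‖x₀ - p‖ :=
    le_antisymm (le_of_tendsto' hL hbdd) ((hp.2 w (hcluster w q hq hwk)).trans hw_le)
  rwa [hL_eq] at hL

theorem tendsto_of_subset_haugH [CompleteSpace E] {C : Set E} {x₀ p : E} {x : ℕ → E}
    (hp : p ∈ C ∧ ∀ y ∈ C, ‖x₀ - p‖ ≤ ‖x₀ - y‖) (hC : ∀ n, C ⊆ haugH x₀ (x n))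
    (hmono : Monotone fun n => ‖x₀ - x n‖)
    (hcluster : ∀ (w : E) (q : ℕ → ℕ), StrictMono q →
      (∀ u : E, Tendsto (fun n => ⟪x (q n), u⟫_ℝ) atTop (𝓝 ⟪w, u⟫_ℝ)) → w ∈ C) :
    Tendsto x atTop (𝓝 p) := by
  have hgap : Tendsto (fun n => ‖x₀ - p‖ ^ 2 - ‖x₀ - x n‖ ^ 2) atTop (𝓝 0) := by
    rw [← sub_self (‖x₀ - p‖ ^ 2)]
    exact tendsto_const_nhds.sub ((tendsto_norm_sub_of_subset_haugH hp hC hmono hcluster).pow 2)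
  have hsq : Tendsto (fun n => ‖p - x n‖ ^ 2) atTop (𝓝 0) :=
    squeeze_zero (fun n => sq_nonneg _) (fun n => by
      linarith [sq_norm_sub_add_sq_norm_sub_le_of_mem_haugH (hC n hp.1)]) hgap
  rw [tendsto_iff_norm_sub_tendsto_zero]
  simpa [norm_sub_rev p, Real.sqrt_sq (norm_nonneg _)] using hsq.sqrt

theorem subset_haugH_of_haugazeau {C : Set E} {x₀ : E} {x xh : ℕ → E} (hx0 : x 0 = x₀)
    (hCH : ∀ n, C ⊆ haugH (x n) (xh n))
    (hproj : ∀ n, x (n + 1) ∈ haugH x₀ (x n) ∩ haugH (x n) (xh n) ∧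
      ∀ y ∈ haugH x₀ (x n) ∩ haugH (x n) (xh n), ‖x₀ - x (n + 1)‖ ≤ ‖x₀ - y‖) :
    ∀ n, C ⊆ haugH x₀ (x n)
  | 0 => fun c _ => by simp [haugH, hx0]
  | n + 1 => (Set.subset_inter (subset_haugH_of_haugazeau hx0 hCH hproj n) (hCH n)).trans <|
      subset_haugH_of_forall_norm_sub_le ((convex_haugH _ _).inter (convex_haugH _ _))
        (hproj n).1 (hproj n).2

end Haugazeau

theorem haugazeau_iteration_strong_convergence_general
    {E : Type*} [NormedAddCommGroup E] [InnerProductSpace ℝ E] [CompleteSpace E]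
    (C : Set E)
    (x₀ : E) (pC : E) (hpC : pC ∈ C ∧ ∀ y ∈ C, ‖x₀ - pC‖ ≤ ‖x₀ - y‖)
    (x xh : ℕ → E) (hx0 : x 0 = x₀)
    (hCH : ∀ n, C ⊆ haugH (x n) (xh n))
    (hproj : ∀ n, x (n + 1) ∈ haugH x₀ (x n) ∩ haugH (x n) (xh n) ∧
      ∀ y ∈ haugH x₀ (x n) ∩ haugH (x n) (xh n), ‖x₀ - x (n + 1)‖ ≤ ‖x₀ - y‖)
    (hcluster : ∀ (w : E) (q : ℕ → ℕ), StrictMono q →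
      (∀ u : E, Tendsto (fun n => ⟪x (q n), u⟫_ℝ) atTop (𝓝 ⟪w, u⟫_ℝ)) → w ∈ C) :
    Tendsto x atTop (𝓝 pC) :=
  tendsto_of_subset_haugH hpC (subset_haugH_of_haugazeau hx0 hCH hproj)
    (monotone_nat_of_le_succ fun n => norm_sub_le_norm_sub_of_mem_haugH (hproj n).1.1) hcluster

/-- In the Haugazeau iteration, if every weak sequential cluster point of
`(xₙ)` lies in `C`, then `xₙ → P_C x₀` strongly. -/
theorem haugazeau_iteration_strong_convergence
    {E : Type*} [NormedAddCommGroup E] [InnerProductSpace ℝ E] [CompleteSpace E]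
    (C : Set E) (hCne : C.Nonempty) (hCcl : IsClosed C) (hCcv : Convex ℝ C)
    (x₀ : E) (pC : E) (hpC : pC ∈ C ∧ ∀ y ∈ C, ‖x₀ - pC‖ ≤ ‖x₀ - y‖)
    (x xh : ℕ → E) (hx0 : x 0 = x₀)
    (hCH : ∀ n, C ⊆ haugH (x n) (xh n))
    (hproj : ∀ n, x (n + 1) ∈ haugH x₀ (x n) ∩ haugH (x n) (xh n) ∧
      ∀ y ∈ haugH x₀ (x n) ∩ haugH (x n) (xh n), ‖x₀ - x (n + 1)‖ ≤ ‖x₀ - y‖)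
    (hcluster : ∀ (w : E) (q : ℕ → ℕ), StrictMono q →
      (∀ u : E, Tendsto (fun n => ⟪x (q n), u⟫_ℝ) atTop (𝓝 ⟪w, u⟫_ℝ)) → w ∈ C) :
    Tendsto x atTop (𝓝 pC) :=
  haugazeau_iteration_strong_convergence_general C x₀ pC hpC x xh hx0 hCH hproj hcluster
end
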